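/- Let K be a compact subset of the open unit disc 𝔻 and let f be holomorphic on 𝔻 \ K. Then there exist a function f₁ holomorphic on 𝔻 and a function f₂ holomorphic on ℂ \ K such that f = f₁ + f₂ on 𝔻 \ K and f₂(z) → 0 as |z| → ∞. -/

import Mathlib

open Set Metric MeasureTheory Filter Topology

noncomputable section

open Classical in
/-- The average of an `EReal`-valued function over the circle of center `z` and radius `r`;
it is `⊥` if the function equals `⊥` on a set of positive measure of the circle or if
its (finite) values are not integrable over the circle. -/
def circleAvg (u : ℂ → EReal) (z : ℂ) (r : ℝ) : EReal :=
  if (IntervalIntegrable (fun θ : ℝ => (u (circleMap z r θ)).toReal) volume 0 (2 * Real.pi)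
      ∧ ∀ᵐ θ ∂(volume.restrict (Set.Ioc (0:ℝ) (2 * Real.pi))), u (circleMap z r θ) ≠ ⊥)
  then (((∫ θ in (0:ℝ)..(2 * Real.pi), (u (circleMap z r θ)).toReal) / (2 * Real.pi) : ℝ) : EReal)
  else ⊥

/-- `u` is plurisubharmonic on a (typically open) set `Ω` of a complex vector space:
it takes values in `[-∞, ∞)`, is upper semicontinuous on `Ω`, is not identically `-∞`
on any connected component of `Ω`, and its restriction to every complex line satisfies
the sub-mean value inequality on circles (whose closed discs lie in `Ω`). -/
def PSHOn {E : Type*} [NormedAddCommGroup E] [NormedSpace ℂ E]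
    (u : E → EReal) (Ω : Set E) : Prop :=
  (∀ z ∈ Ω, u z ≠ ⊤) ∧
  UpperSemicontinuousOn u Ω ∧
  (∀ z ∈ Ω, ∃ w ∈ connectedComponentIn Ω z, u w ≠ ⊥) ∧
  ∀ a b : E, ∀ c : ℂ, ∀ r : ℝ, 0 < r →
    (∀ l ∈ Metric.closedBall c r, a + l • b ∈ Ω) →
    u (a + c • b) ≤ circleAvg (fun l : ℂ => u (a + l • b)) c r

/-- In one complex variable, plurisubharmonic = subharmonic. -/
abbrev SubharmonicOn (u : ℂ → EReal) (Ω : Set ℂ) : Prop := PSHOn u Ω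

/-- A set `P ⊆ ℂ` is polar if `P ⊆ {u = -∞}` for some subharmonic `u` on `ℂ`
(not identically `-∞`). -/
def PolarSet (P : Set ℂ) : Prop :=
  ∃ u : ℂ → EReal, SubharmonicOn u Set.univ ∧ ∀ z ∈ P, u z = ⊥

/-- `S` is pluripolar in `Ω`. -/
def PluripolarIn {E : Type*} [NormedAddCommGroup E] [NormedSpace ℂ E]
    (S Ω : Set E) : Prop :=
  ∃ u : E → EReal, PSHOn u Ω ∧ ∀ z ∈ S, u z = ⊥

/-- `S` is complete pluripolar in `Ω`: `S` is exactly the `-∞`-set of some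
plurisubharmonic function on `Ω`. -/
def CompletePluripolarIn {E : Type*} [NormedAddCommGroup E] [NormedSpace ℂ E]
    (S Ω : Set E) : Prop :=
  ∃ u : E → EReal, PSHOn u Ω ∧ ∀ z ∈ Ω, (u z = ⊥ ↔ z ∈ S)

/-- The pluripolar hull `S*_Ω` of `S` in `Ω`. -/
def pluripolarHull {E : Type*} [NormedAddCommGroup E] [NormedSpace ℂ E]
    (S Ω : Set E) : Set E :=
  {z ∈ Ω | ∀ u : E → EReal, PSHOn u Ω → (∀ w ∈ S, u w = ⊥) → u z = ⊥}

/-- `S` is (pluri-)thin at `ζ`: either `ζ` is not a limit point of `S \ {ζ}`, or there is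
a plurisubharmonic function on a neighborhood of `ζ` with
`limsup_{z → ζ, z ∈ S \ {ζ}} u z < u ζ`. -/
def PluriThinAt {E : Type*} [NormedAddCommGroup E] [NormedSpace ℂ E]
    (S : Set E) (ζ : E) : Prop :=
  ζ ∉ closure (S \ {ζ}) ∨
  ∃ U : Set E, IsOpen U ∧ ζ ∈ U ∧ ∃ u : E → EReal, PSHOn u U ∧
    Filter.limsup u (nhdsWithin ζ (S \ {ζ})) < u ζ

/-- Thinness in `ℂ`. -/
abbrev ThinAt (S : Set ℂ) (ζ : ℂ) : Prop := PluriThinAt S ζ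

/-- The relative extremal function (pluriharmonic measure) `ω(z, A, D)`:
`-sup { u(z) : u` psh on `D`, `u ≤ 0` on `D`, `u ≤ -1` on `A }`, where for points of `A`
not belonging to `D` the condition `u ≤ -1` is understood as
`limsup_{ζ → w, ζ ∈ D} u(ζ) ≤ -1` (for `w ∈ A ∩ D` and `u` upper semicontinuous the
condition below is equivalent to `u w ≤ -1`). -/
def relExtremal {E : Type*} [NormedAddCommGroup E] [NormedSpace ℂ E]
    (z : E) (A D : Set E) : EReal :=
  - sSup {y : EReal | ∃ u : E → EReal, PSHOn u D ∧ (∀ w ∈ D, u w ≤ 0) ∧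
      (∀ w ∈ A, Filter.limsup u (nhdsWithin w (insert w D)) ≤ -1) ∧ y = u z}

/-- `ζ` is a regular boundary point of `Ω` if `ζ ∈ ∂Ω` and `ℂ \ Ω` is non-thin at `ζ`. -/
def RegularBoundaryPoint (Ω : Set ℂ) (ζ : ℂ) : Prop :=
  ζ ∈ frontier Ω ∧ ¬ ThinAt Ωᶜ ζ

/-- The graph `Γ_f = {(z, f z) : z ∈ S} ⊆ ℂ²` of `f` over `S`. -/
def graphOver (f : ℂ → ℂ) (S : Set ℂ) : Set (ℂ × ℂ) := {p | p.1 ∈ S ∧ p.2 = f p.1}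

/-- `e^x` for `x ∈ [-∞, ∞)`, as a map to `[0, ∞)`. -/
def expEReal (x : EReal) : ℝ := if x = ⊥ then 0 else Real.exp x.toReal

end

namespace St6

noncomputable def F (f : ℂ → ℂ) (r : ℝ) (z : ℂ) : ℂ :=
  (2 * Real.pi * Complex.I : ℂ)⁻¹ • ∮ w in C(0, r), (w - z)⁻¹ • f w

variable {K : Set ℂ} {f : ℂ → ℂ} {m : ℝ}

lemma mem_diff_of (hKm : ∀ z ∈ K, ‖z‖ ≤ m) {w : ℂ}
    (h1 : m < ‖w‖) (h2 : ‖w‖ < 1) : w ∈ ball (0:ℂ) 1 \ K := by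
  refine ⟨by simpa using h2, fun hw => absurd (hKm w hw) (not_le.2 h1)⟩

lemma annulus_sub (hKm : ∀ z ∈ K, ‖z‖ ≤ m) {r R : ℝ} (h1 : m < r) (h2 : R < 1) :
    closedBall (0:ℂ) R \ ball 0 r ⊆ ball (0:ℂ) 1 \ K := by
  rintro w ⟨hw1, hw2⟩
  rw [mem_closedBall_zero_iff] at hw1
  rw [mem_ball_zero_iff, not_lt] at hw2
  exact mem_diff_of hKm (h1.trans_le (by simpa using hw2))
    (lt_of_le_of_lt (by simpa using hw1) h2)

lemma sphere_sub (hKm : ∀ z ∈ K, ‖z‖ ≤ m) {r : ℝ} (h1 : m < r) (h2 : r < 1) :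
    sphere (0:ℂ) r ⊆ ball (0:ℂ) 1 \ K := by
  intro w hw
  rw [mem_sphere_zero_iff_norm] at hw
  exact mem_diff_of hKm (hw ▸ h1) (hw ▸ h2)


lemma circleInt (hf : DifferentiableOn ℂ f (ball (0:ℂ) 1 \ K))
    (hKm : ∀ z ∈ K, ‖z‖ ≤ m) (hm0 : 0 ≤ m) {r : ℝ} (h1 : m < r) (h2 : r < 1) :
    CircleIntegrable f 0 r :=
  ContinuousOn.circleIntegrable (hm0.trans h1.le)
    (hf.continuousOn.mono (sphere_sub hKm h1 h2))

lemma F_diff_ball (hf : DifferentiableOn ℂ f (ball (0:ℂ) 1 \ K))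
    (hKm : ∀ z ∈ K, ‖z‖ ≤ m) (hm0 : 0 ≤ m) {r : ℝ} (h1 : m < r) (h2 : r < 1) :
    DifferentiableOn ℂ (F f r) (ball (0:ℂ) r) := by
  have hr0 : 0 < r := hm0.trans_lt h1
  have hint : CircleIntegrable f 0 (r.toNNReal : ℝ) := by
    rw [Real.coe_toNNReal r hr0.le]
    exact circleInt hf hKm hm0 h1 h2
  have H := hasFPowerSeriesOn_cauchy_integral hint (by simpa using hr0)
  have := H.differentiableOn
  rw [Metric.emetric_ball_nnreal, Real.coe_toNNReal r hr0.le] at this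
  exact this.congr (fun z hz => rfl)

lemma F_eq (hKc : IsClosed K) (hf : DifferentiableOn ℂ f (ball (0:ℂ) 1 \ K))
    (hKm : ∀ z ∈ K, ‖z‖ ≤ m) (hm0 : 0 ≤ m) {r₁ r₂ : ℝ} {z : ℂ}
    (h1 : m < r₁) (h12 : r₁ ≤ r₂) (h2 : r₂ < 1)
    (hz : z ∉ closedBall (0:ℂ) r₂ \ ball 0 r₁) : F f r₁ z = F f r₂ z := by
  have hopen : IsOpen (ball (0:ℂ) 1 \ K) := isOpen_ball.sdiff hKc
  unfold F
  congr 1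
  symm
  refine Complex.circleIntegral_eq_of_differentiable_on_annulus_off_countable (hm0.trans_lt h1) h12
    countable_empty ?_ ?_
  · refine ContinuousOn.smul (f := fun w => (w - z)⁻¹) (g := f) ?_ (hf.continuousOn.mono (annulus_sub hKm h1 h2))
    refine (continuousOn_id.sub continuousOn_const).inv₀ fun w hw => sub_ne_zero.2 ?_
    exact fun h => hz ((show w = z from h) ▸ hw)
  · rintro w ⟨hw, -⟩
    have hw1 : w ∈ ball (0:ℂ) 1 \ K :=
      annulus_sub hKm h1 h2 ⟨ball_subset_closedBall hw.1,
        fun h => hw.2 (ball_subset_closedBall h)⟩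
    have hwz : w ≠ z := fun h => hz (h ▸ ⟨ball_subset_closedBall hw.1,
        fun h' => hw.2 (ball_subset_closedBall h')⟩)
    exact ((differentiableAt_id.sub_const z).inv (sub_ne_zero.2 hwz)).smul
      (hf.differentiableAt (hopen.mem_nhds hw1))

lemma F_cauchy (hKc : IsClosed K) (hf : DifferentiableOn ℂ f (ball (0:ℂ) 1 \ K))
    (hKm : ∀ z ∈ K, ‖z‖ ≤ m) (hm0 : 0 ≤ m) {r₁ r₂ : ℝ} {z : ℂ}
    (h1 : m < r₁) (hz1 : r₁ < ‖z‖) (hz2 : ‖z‖ < r₂) (h2 : r₂ < 1) :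
    F f r₂ z - F f r₁ z = f z := by
  have hopen : IsOpen (ball (0:ℂ) 1 \ K) := isOpen_ball.sdiff hKc
  have hr₁0 : 0 < r₁ := hm0.trans_lt h1
  have h12 : r₁ ≤ r₂ := (hz1.trans hz2).le
  have hzU : z ∈ ball (0:ℂ) 1 \ K := mem_diff_of hKm (h1.trans hz1) (hz2.trans h2)
  have hfz : DifferentiableAt ℂ f z := hf.differentiableAt (hopen.mem_nhds hzU)
  have hUd : ∀ w ∈ ball (0:ℂ) 1 \ K, ContinuousAt (dslope f z) w := by
    intro w hw
    rcases eq_or_ne w z with rfl | hwz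
    · exact continuousAt_dslope_same.2 hfz
    · exact (continuousAt_dslope_of_ne hwz).2
        (hf.differentiableAt (hopen.mem_nhds hw)).continuousAt
  have heq : (∮ w in C(0, r₂), dslope f z w) = ∮ w in C(0, r₁), dslope f z w := by
    refine Complex.circleIntegral_eq_of_differentiable_on_annulus_off_countable hr₁0 h12
      (Set.countable_singleton z)
      (fun w hw => (hUd w (annulus_sub hKm h1 h2 hw)).continuousWithinAt) ?_
    rintro w ⟨hw, hwz⟩
    refine (differentiableAt_dslope_of_ne (by simpa using hwz)).2
      (hf.differentiableAt (hopen.mem_nhds (annulus_sub hKm h1 h2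
        ⟨ball_subset_closedBall hw.1, fun h => hw.2 (ball_subset_closedBall h)⟩)))
  have hdecomp : ∀ r : ℝ, m < r → r < 1 → ‖z‖ ≠ r →
      (∮ w in C(0, r), (w - z)⁻¹ • f w)
        = (∮ w in C(0, r), dslope f z w) + (∮ w in C(0, r), (w - z)⁻¹) • f z := by
    intro r hr1 hr2 hzr
    have hr0 : 0 < r := hm0.trans_lt hr1
    have hsz : ∀ w ∈ sphere (0:ℂ) r, w ≠ z := by
      intro w hw h
      rw [mem_sphere_zero_iff_norm] at hw
      exact hzr (by rw [← h, hw])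
    have hfc : ContinuousOn f (sphere (0:ℂ) r) := hf.continuousOn.mono (sphere_sub hKm hr1 hr2)
    have hic : ContinuousOn (fun w : ℂ => (w - z)⁻¹) (sphere (0:ℂ) r) :=
      (continuousOn_id.sub continuousOn_const).inv₀ fun w hw => sub_ne_zero.2 (hsz w hw)
    have hint1 : CircleIntegrable (fun w => (w - z)⁻¹ • f w) 0 r :=
      (hic.smul hfc).circleIntegrable hr0.le
    have hint2 : CircleIntegrable (fun w => (w - z)⁻¹ • f z) 0 r :=
      (hic.smul continuousOn_const).circleIntegrable hr0.le
    have hds : (∮ w in C(0,r), dslope f z w)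
        = (∮ w in C(0,r), (w - z)⁻¹ • f w) - ∮ w in C(0,r), (w - z)⁻¹ • f z := by
      rw [← circleIntegral.integral_sub hint1 hint2]
      refine circleIntegral.integral_congr hr0.le fun w hw => ?_
      have hwz := hsz w hw
      rw [dslope_of_ne f hwz, slope_def_field]
      rw [smul_eq_mul, smul_eq_mul, div_eq_inv_mul, mul_sub]
    rw [hds, circleIntegral.integral_smul_const]
    abel
  have h2pi : (∮ w in C(0, r₂), (w - z)⁻¹) = 2 * Real.pi * Complex.I :=
    circleIntegral.integral_sub_inv_of_mem_ball (by simpa using hz2)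
  have h0 : (∮ w in C(0, r₁), (w - z)⁻¹) = 0 := by
    refine Complex.circleIntegral_eq_zero_of_differentiable_on_off_countable hr₁0.le
      countable_empty ?_ ?_
    · refine (continuousOn_id.sub continuousOn_const).inv₀ fun w hw => sub_ne_zero.2 ?_
      rw [mem_closedBall_zero_iff] at hw
      exact fun h => absurd ((show w = z from h) ▸ hw) (not_le.2 hz1)
    · rintro w ⟨hw, -⟩
      rw [mem_ball_zero_iff] at hw
      exact (differentiableAt_id.sub_const z).inv
        (sub_ne_zero.2 fun h => absurd (h ▸ hw.le) (not_le.2 hz1))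
  unfold F
  rw [← smul_sub, hdecomp r₂ (h1.trans_le h12) h2 hz2.ne,
    hdecomp r₁ h1 (lt_of_le_of_lt h12 h2) hz1.ne', heq, h2pi, h0, zero_smul, add_zero,
    add_sub_cancel_left, smul_smul, inv_mul_cancel₀ Complex.two_pi_I_ne_zero, one_smul]

lemma F_diff_ext (hKc : IsClosed K) (hf : DifferentiableOn ℂ f (ball (0:ℂ) 1 \ K))
    (hKm : ∀ z ∈ K, ‖z‖ ≤ m) (hm0 : 0 ≤ m) {r : ℝ} (h1 : m < r) (h2 : r < 1)
    {z₀ : ℂ} (hz : r < ‖z₀‖) : DifferentiableAt ℂ (F f r) z₀ := by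
  have hopen : IsOpen (ball (0:ℂ) 1 \ K) := isOpen_ball.sdiff hKc
  have hr0 : 0 < r := hm0.trans_lt h1
  set w : ℝ → ℂ := fun θ => circleMap 0 r θ with hw
  set d : ℝ → ℂ := fun θ => deriv (circleMap 0 r) θ with hd
  set g : ℝ → ℂ := fun θ => f (w θ) with hgdef
  have hwc : Continuous w := continuous_circleMap 0 r
  have hdc : Continuous d := by
    simp only [hd, deriv_circleMap]
    exact (continuous_circleMap 0 r).mul continuous_const
  have hdnorm : ∀ θ, ‖d θ‖ = r := by
    intro θ
    simp [hd, deriv_circleMap, norm_circleMap_zero, abs_of_pos hr0]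
  have hg : Continuous g := by
    rw [continuous_iff_continuousAt]
    intro θ
    exact ((hf.differentiableAt (hopen.mem_nhds (sphere_sub hKm h1 h2
      (circleMap_mem_sphere 0 hr0.le θ)))).continuousAt).comp hwc.continuousAt
  obtain ⟨C, hC⟩ := (isCompact_uIcc (a := (0:ℝ)) (b := 2*Real.pi)).exists_bound_of_continuousOn
    hg.continuousOn
  have hC0 : 0 ≤ C := le_trans (norm_nonneg _) (hC 0 left_mem_uIcc)
  set ε : ℝ := (‖z₀‖ - r)/2 with hε
  have hε0 : 0 < ε := by simp only [hε]; linarith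
  have hden : ∀ (θ : ℝ), ∀ x ∈ ball z₀ ε, ε ≤ ‖w θ - x‖ := by
    intro θ x hx
    have h1' : ‖(w θ)‖ = r := by
      simp [hw, norm_circleMap_zero, abs_of_pos hr0]
    have h2' : ‖(x - z₀)‖ < ε := by
      simpa [dist_eq_norm] using hx
    have h3' : ‖z₀‖ - ‖(x - z₀)‖ ≤ ‖x‖ := by
      have h4 := norm_sub_norm_le z₀ (z₀ - x)
      simp only [sub_sub_cancel] at h4
      have h6 : ‖(z₀ - x)‖ = ‖(x - z₀)‖ := by
        rw [← neg_sub, norm_neg]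
      linarith
    have h4' : ‖x‖ - ‖(w θ)‖ ≤ ‖(w θ - x)‖ := by
      have h5 := norm_sub_norm_le x (w θ)
      have h6 : ‖(x - w θ)‖ = ‖(w θ - x)‖ := by
        rw [← neg_sub, norm_neg]
      linarith
    have hεeq : ‖z₀‖ - ε - r = ε := by rw [hε]; ring
    rw [h1'] at h4'
    linarith
  have hne : ∀ (θ : ℝ), ∀ x ∈ ball z₀ ε, w θ - x ≠ 0 := by
    intro θ x hx h
    have := hden θ x hx
    rw [h, norm_zero] at this
    linarith
  have main : HasDerivAt (fun x => ∫ θ in (0:ℝ)..2*Real.pi, d θ • ((w θ - x)⁻¹ • g θ))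
      (∫ θ in (0:ℝ)..2*Real.pi, d θ • ((((w θ - z₀))^2)⁻¹ • g θ)) z₀ := by
    have := intervalIntegral.hasDerivAt_integral_of_dominated_loc_of_deriv_le
      (𝕜 := ℂ) (μ := volume) (a := (0:ℝ)) (b := 2*Real.pi)
      (F := fun x θ => d θ • ((w θ - x)⁻¹ • g θ))
      (F' := fun x θ => d θ • ((((w θ - x))^2)⁻¹ • g θ))
      (x₀ := z₀) (bound := fun _ => r * ((ε^2)⁻¹ * C)) (ball_mem_nhds z₀ hε0) ?_ ?_ ?_ ?_ ?_ ?_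
    · exact this.2
    · filter_upwards [ball_mem_nhds z₀ hε0] with x hx
      exact (hdc.smul (((hwc.sub continuous_const).inv₀ (fun θ => hne θ x hx)).smul
        hg)).aestronglyMeasurable
    · exact (hdc.smul (((hwc.sub continuous_const).inv₀
        (fun θ => hne θ z₀ (mem_ball_self hε0))).smul hg)).intervalIntegrable _ _
    · exact (hdc.smul ((((hwc.sub continuous_const).pow 2).inv₀
        (fun θ => pow_ne_zero 2 (hne θ z₀ (mem_ball_self hε0)))).smul
        hg)).aestronglyMeasurable
    · refine Filter.Eventually.of_forall fun θ hθ x hx => ?_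
      have hd1 : ε ≤ ‖w θ - x‖ := hden θ x hx
      have hθ' : θ ∈ Set.uIcc (0:ℝ) (2*Real.pi) := Set.uIoc_subset_uIcc hθ
      rw [norm_smul, norm_smul, hdnorm θ, norm_inv, norm_pow]
      refine mul_le_mul_of_nonneg_left ?_ hr0.le
      refine mul_le_mul ?_ (hC θ hθ') (norm_nonneg _) (by positivity)
      refine inv_anti₀ (by positivity) ?_
      exact pow_le_pow_left₀ hε0.le hd1 2
    · exact intervalIntegrable_const
    · refine Filter.Eventually.of_forall fun θ hθ x hx => ?_
      have h1' : HasDerivAt (fun y : ℂ => w θ - y) (-1) x := (hasDerivAt_id x).const_sub (w θ)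
      have h2' := h1'.inv (hne θ x hx)
      have h3' : HasDerivAt (fun y : ℂ => (w θ - y)⁻¹) (((w θ - x)^2)⁻¹) x := by
        rw [neg_neg, one_div] at h2'
        exact h2'
      exact ((h3'.smul_const (g θ)).const_smul (d θ))
  have hFeq : F f r = fun x => (2 * Real.pi * Complex.I : ℂ)⁻¹ •
      ∫ θ in (0:ℝ)..2*Real.pi, d θ • ((w θ - x)⁻¹ • g θ) := by
    funext x
    simp only [F, circleIntegral, hd, hw, hgdef]
  rw [hFeq]
  exact ((main.const_smul (2 * Real.pi * Complex.I : ℂ)⁻¹).differentiableAt)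

lemma F_decay (hf : DifferentiableOn ℂ f (ball (0:ℂ) 1 \ K))
    (hKm : ∀ z ∈ K, ‖z‖ ≤ m) (hm0 : 0 ≤ m) {r : ℝ} (h1 : m < r) (h2 : r < 1) :
    Tendsto (F f r) (comap (fun z : ℂ => ‖z‖) atTop) (nhds 0) := by
  have hr0 : 0 < r := hm0.trans_lt h1
  obtain ⟨C, hC⟩ := (isCompact_sphere (0:ℂ) r).exists_bound_of_continuousOn
    (hf.continuousOn.mono (sphere_sub hKm h1 h2))
  have hrS : (r:ℂ) ∈ sphere (0:ℂ) r := by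
    simp [mem_sphere_zero_iff_norm, Complex.norm_real, abs_of_pos hr0]
  have hC0 : 0 ≤ C := le_trans (norm_nonneg _) (hC _ hrS)
  have key : ∀ z : ℂ, r < ‖z‖ → ‖F f r z‖ ≤ r * C / (‖z‖ - r) := by
    intro z hz
    have hzr : 0 < ‖z‖ - r := by linarith
    have hbd : ∀ w ∈ sphere (0:ℂ) r, ‖(w - z)⁻¹ • f w‖ ≤ (‖z‖ - r)⁻¹ * C := by
      intro w hwS
      have hwr : ‖w‖ = r := by
        rw [mem_sphere_zero_iff_norm] at hwS
        exact hwS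
      have hwz : ‖z‖ - r ≤ ‖w - z‖ := by
        have h5 := norm_sub_norm_le z w
        rw [norm_sub_rev z w] at h5
        linarith
      rw [norm_smul, norm_inv]
      refine mul_le_mul ?_ (hC w hwS) (norm_nonneg _) (inv_nonneg.2 hzr.le)
      exact inv_anti₀ hzr hwz
    have hint := circleIntegral.norm_integral_le_of_norm_le_const (c := (0:ℂ)) hr0.le hbd
    have hFn : ‖F f r z‖ = (2*Real.pi)⁻¹ * ‖∮ w in C(0, r), (w - z)⁻¹ • f w‖ := by
      rw [F, norm_smul]
      congr 1
      rw [norm_inv]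
      simp [norm_mul, Complex.norm_I, Complex.norm_two, Complex.norm_real,
        abs_of_pos Real.pi_pos]
    rw [hFn]
    calc (2*Real.pi)⁻¹ * ‖∮ w in C(0, r), (w - z)⁻¹ • f w‖
        ≤ (2*Real.pi)⁻¹ * (2 * Real.pi * r * ((‖z‖ - r)⁻¹ * C)) :=
          mul_le_mul_of_nonneg_left hint (inv_nonneg.2 (by positivity))
      _ = r * C / (‖z‖ - r) := by
          field_simp [Real.pi_ne_zero]
  have htop : Tendsto (fun x : ℝ => r * C / (x - r)) atTop (𝓝 0) := by
    refine Tendsto.div_atTop tendsto_const_nhds ?_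
    have := tendsto_atTop_add_const_right atTop (-r) tendsto_id
    simpa [sub_eq_add_neg] using this
  refine squeeze_zero_norm' ?_ (htop.comp tendsto_comap)
  filter_upwards [tendsto_comap.eventually (eventually_gt_atTop r)] with z hz
  exact key z hz

end St6

/-- For `K` compact in the unit disc and `f` holomorphic on `𝔻 \ K`,
there are `f₁` holomorphic on `𝔻` and `f₂` holomorphic on `ℂ \ K` with `f = f₁ + f₂`
on `𝔻 \ K` and `f₂(z) → 0` as `|z| → ∞`. -/
theorem statement6 (K : Set ℂ) (f : ℂ → ℂ)
    (hK : K ⊆ Metric.ball (0:ℂ) 1) (hKcpt : IsCompact K)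
    (hf : DifferentiableOn ℂ f (Metric.ball (0:ℂ) 1 \ K)) :
    ∃ f₁ f₂ : ℂ → ℂ,
      DifferentiableOn ℂ f₁ (Metric.ball (0:ℂ) 1) ∧
      DifferentiableOn ℂ f₂ Kᶜ ∧
      (∀ z ∈ Metric.ball (0:ℂ) 1 \ K, f z = f₁ z + f₂ z) ∧
      Filter.Tendsto f₂ (Filter.comap (fun z : ℂ => ‖z‖) Filter.atTop) (nhds 0) := by
  rcases K.eq_empty_or_nonempty with rfl | hKne
  · exact ⟨f, 0, by simpa using hf, differentiableOn_const 0, fun z hz => by simp,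
      by exact (tendsto_const_nhds :
        Tendsto (fun _ : ℂ => (0:ℂ)) (comap (fun z : ℂ => ‖z‖) atTop) (𝓝 0))⟩
  obtain ⟨z₀, hz₀K, hz₀max⟩ := hKcpt.exists_isMaxOn hKne continuous_norm.continuousOn
  rw [isMaxOn_iff] at hz₀max
  set m := ‖z₀‖ with hm
  have hKm : ∀ z ∈ K, ‖z‖ ≤ m := hz₀max
  have hm0 : 0 ≤ m := norm_nonneg _
  have hm1 : m < 1 := by
    have := mem_ball_zero_iff.1 (hK hz₀K)
    simpa using this
  have hKc : IsClosed K := hKcpt.isClosed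
  have hopen : IsOpen (ball (0:ℂ) 1 \ K) := isOpen_ball.sdiff hKc
  set s : ℝ := (m+1)/2 with hs
  set s' : ℝ := (m+3)/4 with hs'
  have hms : m < s := by rw [hs]; linarith
  have hss' : s < s' := by rw [hs, hs']; linarith
  have hs'1 : s' < 1 := by rw [hs']; linarith
  have hs1 : s < 1 := by rw [hs]; linarith
  set ρ : ℂ → ℝ := fun z => (max m (‖z‖) + 1)/2 with hρ
  have hρm : ∀ z, m < ρ z := fun z => by
    have := le_max_left m (‖z‖); simp only [hρ]; linarith
  have hρz : ∀ z, ‖z‖ < 1 → ‖z‖ < ρ z := fun z h => by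
    have := le_max_right m (‖z‖); simp only [hρ]; linarith
  have hρ1 : ∀ z, ‖z‖ < 1 → ρ z < 1 := fun z h => by
    have : max m (‖z‖) < 1 := max_lt hm1 h
    simp only [hρ]; linarith
  set f₁ : ℂ → ℂ := fun z => St6.F f (ρ z) z with hf₁def
  have hFeq' : ∀ (r₁ r₂ : ℝ) (z : ℂ), m < r₁ → m < r₂ → r₁ < 1 → r₂ < 1 →
      ‖z‖ < r₁ → ‖z‖ < r₂ → St6.F f r₁ z = St6.F f r₂ z := by
    intro r₁ r₂ z h₁ h₂ h₁1 h₂1 hz₁ hz₂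
    rcases le_total r₁ r₂ with h | h
    · exact St6.F_eq hKc hf hKm hm0 h₁ h h₂1
        (fun hmem => hmem.2 (mem_ball_zero_iff.2 (by exact hz₁)))
    · exact (St6.F_eq hKc hf hKm hm0 h₂ h h₁1
        (fun hmem => hmem.2 (mem_ball_zero_iff.2 (by exact hz₂)))).symm
  have hf₁F : ∀ z : ℂ, ‖z‖ < 1 → ∀ r, m < r → r < 1 → ‖z‖ < r →
      f₁ z = St6.F f r z :=
    fun z h r h1 h2 h3 => hFeq' (ρ z) r z (hρm z) h1 (hρ1 z h) h2 (hρz z h) h3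
  have hf₁diff : DifferentiableOn ℂ f₁ (ball (0:ℂ) 1) := by
    intro w₀ hw₀
    have habs : ‖w₀‖ < 1 := by
      simpa using mem_ball_zero_iff.1 hw₀
    have h1 : m < ρ w₀ := hρm w₀
    have h2 : ρ w₀ < 1 := hρ1 w₀ habs
    have h3 : ‖w₀‖ < ρ w₀ := hρz w₀ habs
    have hmem : w₀ ∈ ball (0:ℂ) (ρ w₀) :=
      mem_ball_zero_iff.2 (by exact h3)
    have hDA : DifferentiableAt ℂ (St6.F f (ρ w₀)) w₀ :=
      (St6.F_diff_ball hf hKm hm0 h1 h2).differentiableAt (isOpen_ball.mem_nhds hmem)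
    have hEq : f₁ =ᶠ[𝓝 w₀] St6.F f (ρ w₀) := by
      filter_upwards [isOpen_ball.mem_nhds hmem] with z hz
      have hz' : ‖z‖ < ρ w₀ := by
        simpa using mem_ball_zero_iff.1 hz
      exact hf₁F z (hz'.trans h2) (ρ w₀) h1 h2 hz'
    exact (hEq.differentiableAt_iff.2 hDA).differentiableWithinAt
  set f₂ : ℂ → ℂ := fun z => if ‖z‖ < s' then f z - f₁ z else -St6.F f s z with hf₂def
  have hkey : ∀ z : ℂ, s < ‖z‖ → ‖z‖ < 1 → f z - f₁ z = -St6.F f s z := by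
    intro z h₁ h₂
    set r : ℝ := (‖z‖ + 1)/2 with hr
    have hr1 : ‖z‖ < r := by rw [hr]; linarith
    have hr2 : r < 1 := by rw [hr]; linarith
    have hrm : m < r := by rw [hr]; linarith
    have hcau := St6.F_cauchy hKc hf hKm hm0 hms h₁ hr1 hr2
    rw [hf₁F z h₂ r hrm hr2 hr1, ← hcau]
    ring
  refine ⟨f₁, f₂, hf₁diff, ?_, ?_, ?_⟩
  · intro w₀ hw₀
    rcases lt_or_ge (‖w₀‖) s' with h | h
    · have hw₀U : w₀ ∈ ball (0:ℂ) 1 \ K :=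
        ⟨mem_ball_zero_iff.2 (by linarith), hw₀⟩
      have hfd : DifferentiableAt ℂ (fun z => f z - f₁ z) w₀ :=
        (hf.differentiableAt (hopen.mem_nhds hw₀U)).sub
          (hf₁diff.differentiableAt (isOpen_ball.mem_nhds hw₀U.1))
      have hEq : f₂ =ᶠ[𝓝 w₀] fun z => f z - f₁ z := by
        filter_upwards [isOpen_ball.mem_nhds (show w₀ ∈ ball (0:ℂ) s' from
          mem_ball_zero_iff.2 (by exact h))] with z hz
        have hz' : ‖z‖ < s' := by
          simpa using mem_ball_zero_iff.1 hz
        simp only [hf₂def, if_pos hz']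
      exact (hEq.differentiableAt_iff.2 hfd).differentiableWithinAt
    · have hsz : s < ‖w₀‖ := lt_of_lt_of_le hss' h
      have hopen2 : IsOpen {z : ℂ | s < ‖z‖} :=
        isOpen_lt continuous_const continuous_norm
      have hfd : DifferentiableAt ℂ (fun z => -St6.F f s z) w₀ :=
        (St6.F_diff_ext hKc hf hKm hm0 hms hs1 hsz).neg
      have hEq : f₂ =ᶠ[𝓝 w₀] fun z => -St6.F f s z := by
        filter_upwards [hopen2.mem_nhds hsz] with z hz
        by_cases h' : ‖z‖ < s'
        · simp only [hf₂def, if_pos h']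
          exact hkey z hz (by linarith [hs'1])
        · simp only [hf₂def, if_neg h']
      exact (hEq.differentiableAt_iff.2 hfd).differentiableWithinAt
  · rintro z ⟨hz1, hz2⟩
    have habs : ‖z‖ < 1 := by
      simpa using mem_ball_zero_iff.1 hz1
    by_cases h' : ‖z‖ < s'
    · simp only [hf₂def, if_pos h']; ring
    · simp only [hf₂def, if_neg h']
      have hk := hkey z (lt_of_lt_of_le hss' (not_lt.1 h')) habs
      rw [← hk]; ring
  · have hEq : ∀ᶠ z in comap (fun z : ℂ => ‖z‖) atTop, (fun z => -St6.F f s z) z = f₂ z := by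
      filter_upwards [tendsto_comap.eventually (eventually_ge_atTop s')] with z hz
      simp only [hf₂def, if_neg (not_lt.2 hz)]
    refine Tendsto.congr' hEq ?_
    simpa using (St6.F_decay hf hKm hm0 hms hs1).neg
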